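/- arXiv:1510.01053 — 2 statements merged into one kernel-verified Lean document; each statement's English description precedes it below -/
import Mathlib

section
/- Let τ_u, τ_v : ℝ² → ℝ be C³ with ∂₁²τ_u, ∂₁²τ_v nonvanishing, and suppose ∂₁²τ_u · ∂₂²τ_v = ∂₁²τ_v · ∂₂²τ_u (equal 'Hessian ratios'). Define A and B as above. Then the vector field (A, B) is closed: ∂₂A = ∂₁B, hence on a simply connected domain there exists F with ∂₁F = A and ∂₂F = B. -/
/-!
Writing `u = uncurry τu`, `v = uncurry τv`, the form `A dx + B dy` is `∂₂v d(∂₁u) - ∂₂u d(∂₁v)`.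
After Schwarz's theorem the third-order terms and the mixed products cancel in `∂₂A - ∂₁B`,
leaving `∂₁²u ∂₂²v - ∂₁²v ∂₂²u`, which vanishes by the equal-Hessian-ratio condition.
A closed `C¹` form on all of `ℝ²` has the global potential
`F x y = ∫₀ˣ A(s, y) ds + ∫₀ʸ B(0, t) dt`.
-/

open intervalIntegral Function

noncomputable def partialFst (f : ℝ × ℝ → ℝ) (z : ℝ × ℝ) : ℝ := fderiv ℝ f z (1, 0)

noncomputable def partialSnd (f : ℝ × ℝ → ℝ) (z : ℝ × ℝ) : ℝ := fderiv ℝ f z (0, 1)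

section Partial

variable {f : ℝ × ℝ → ℝ}

lemma hasDerivAt_partialFst {x y : ℝ} (hf : DifferentiableAt ℝ f (x, y)) :
    HasDerivAt (fun s => f (s, y)) (partialFst f (x, y)) x :=
  hf.hasFDerivAt.comp_hasDerivAt x ((hasDerivAt_id x).prodMk (hasDerivAt_const x y))

lemma hasDerivAt_partialSnd {x y : ℝ} (hf : DifferentiableAt ℝ f (x, y)) :
    HasDerivAt (fun t => f (x, t)) (partialSnd f (x, y)) y :=
  hf.hasFDerivAt.comp_hasDerivAt y ((hasDerivAt_const y x).prodMk (hasDerivAt_id y))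

lemma contDiff_partialFst {n m : WithTop ℕ∞} (hf : ContDiff ℝ n f) (h : m + 1 ≤ n) :
    ContDiff ℝ m (partialFst f) :=
  (hf.fderiv_right h).clm_apply contDiff_const

lemma contDiff_partialSnd {n m : WithTop ℕ∞} (hf : ContDiff ℝ n f) (h : m + 1 ≤ n) :
    ContDiff ℝ m (partialSnd f) :=
  (hf.fderiv_right h).clm_apply contDiff_const

lemma partialFst_partialSnd_comm (hf : ContDiff ℝ 2 f) :
    partialFst (partialSnd f) = partialSnd (partialFst f) := by
  funext z
  have hd : DifferentiableAt ℝ (fderiv ℝ f) z :=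
    (hf.fderiv_right (m := 1) (by norm_num)).differentiable one_ne_zero z
  have hfst : partialFst (partialSnd f) z = fderiv ℝ (fderiv ℝ f) z (1, 0) (0, 1) := by
    change fderiv ℝ (fun w => fderiv ℝ f w (0, 1)) z (1, 0) = _
    simp [fderiv_clm_apply hd (differentiableAt_const _)]
  have hsnd : partialSnd (partialFst f) z = fderiv ℝ (fderiv ℝ f) z (0, 1) (1, 0) := by
    change fderiv ℝ (fun w => fderiv ℝ f w (1, 0)) z (0, 1) = _
    simp [fderiv_clm_apply hd (differentiableAt_const _)]
  rw [hfst, hsnd, (hf.contDiffAt.isSymmSndFDerivAt (by norm_num)).eq]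

lemma partialFst_partialFst_partialSnd_comm (hf : ContDiff ℝ 3 f) :
    partialFst (partialFst (partialSnd f)) = partialSnd (partialFst (partialFst f)) := by
  rw [partialFst_partialSnd_comm (hf.of_le (by norm_num)),
    partialFst_partialSnd_comm (contDiff_partialFst hf (by norm_num))]

end Partial

section Curried

variable {τ : ℝ → ℝ → ℝ} {x y : ℝ}

lemma deriv_fst_eq_partialFst (h : DifferentiableAt ℝ (uncurry τ) (x, y)) :
    deriv (fun s => τ s y) x = partialFst (uncurry τ) (x, y) :=
  (hasDerivAt_partialFst h).deriv

lemma deriv_snd_eq_partialSnd (h : DifferentiableAt ℝ (uncurry τ) (x, y)) :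
    deriv (fun t => τ x t) y = partialSnd (uncurry τ) (x, y) :=
  (hasDerivAt_partialSnd h).deriv

lemma deriv_deriv_fst_eq (h : ContDiff ℝ 2 (uncurry τ)) :
    deriv (deriv fun s => τ s y) x = partialFst (partialFst (uncurry τ)) (x, y) := by
  have hd : deriv (fun s => τ s y) = fun s => partialFst (uncurry τ) (s, y) :=
    funext fun s => deriv_fst_eq_partialFst (h.differentiable (by norm_num) _)
  rw [hd]
  exact (hasDerivAt_partialFst ((contDiff_partialFst h le_rfl).differentiable one_ne_zero _)).deriv

lemma deriv_deriv_snd_eq (h : ContDiff ℝ 2 (uncurry τ)) :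
    deriv (deriv fun t => τ x t) y = partialSnd (partialSnd (uncurry τ)) (x, y) := by
  have hd : deriv (fun t => τ x t) = fun t => partialSnd (uncurry τ) (x, t) :=
    funext fun t => deriv_snd_eq_partialSnd (h.differentiable (by norm_num) _)
  rw [hd]
  exact (hasDerivAt_partialSnd ((contDiff_partialSnd h le_rfl).differentiable one_ne_zero _)).deriv

lemma deriv_fst_deriv_snd_eq (h : ContDiff ℝ 2 (uncurry τ)) :
    deriv (fun s => deriv (fun t => τ s t) y) x = partialFst (partialSnd (uncurry τ)) (x, y) := by
  have hd : (fun s => deriv (fun t => τ s t) y) = fun s => partialSnd (uncurry τ) (s, y) :=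
    funext fun s => deriv_snd_eq_partialSnd (h.differentiable (by norm_num) _)
  rw [hd]
  exact (hasDerivAt_partialFst ((contDiff_partialSnd h le_rfl).differentiable one_ne_zero _)).deriv

end Curried

section Potential

variable {P Q : ℝ × ℝ → ℝ}

lemma hasDerivAt_intervalIntegral_snd (hP : ContDiff ℝ 1 P) (a b y : ℝ) :
    HasDerivAt (fun t => ∫ s in a..b, P (s, t)) (∫ s in a..b, partialSnd P (s, y)) y := by
  have hP' : Continuous (partialSnd P) := (contDiff_partialSnd (m := 0) hP le_rfl).continuous
  obtain ⟨C, hC⟩ := (isCompact_uIcc.prod (isCompact_closedBall y 1)).exists_bound_of_continuousOn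
    hP'.continuousOn
  refine (hasDerivAt_integral_of_dominated_loc_of_deriv_le (bound := fun _ => C)
    (Metric.ball_mem_nhds y one_pos)
    (.of_forall fun t => (hP.continuous.comp (by fun_prop)).aestronglyMeasurable)
    ((hP.continuous.comp (by fun_prop)).intervalIntegrable a b)
    ((hP'.comp (by fun_prop)).aestronglyMeasurable) (.of_forall fun s hs t ht => ?_)
    intervalIntegrable_const
    (.of_forall fun s _ t _ => hasDerivAt_partialSnd (hP.differentiable one_ne_zero _))).2
  exact hC (s, t) ⟨Set.uIoc_subset_uIcc hs, Metric.ball_subset_closedBall ht⟩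

theorem exists_potential_of_partialSnd_eq_partialFst (hP : ContDiff ℝ 1 P) (hQ : ContDiff ℝ 1 Q)
    (hPQ : partialSnd P = partialFst Q) :
    ∃ F : ℝ → ℝ → ℝ, ∀ x y,
      HasDerivAt (fun s => F s y) (P (x, y)) x ∧ HasDerivAt (fun t => F x t) (Q (x, y)) y := by
  refine ⟨fun x y => (∫ s in (0 : ℝ)..x, P (s, y)) + ∫ t in (0 : ℝ)..y, Q (0, t),
    fun x y => ⟨?_, ?_⟩⟩
  · exact ((hP.continuous.comp (by fun_prop)).integral_hasStrictDerivAt 0 x).hasDerivAt.add_const _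
  · have hQ' : Continuous (partialFst Q) := (contDiff_partialFst (m := 0) hQ le_rfl).continuous
    have hftc : ∫ s in (0 : ℝ)..x, partialSnd P (s, y) = Q (x, y) - Q (0, y) := by
      rw [hPQ]
      exact integral_eq_sub_of_hasDerivAt
        (fun s _ => hasDerivAt_partialFst (hQ.differentiable one_ne_zero _))
        ((hQ'.comp (by fun_prop)).intervalIntegrable 0 x)
    have hQ0 : Continuous fun t => Q (0, t) := hQ.continuous.comp (by fun_prop)
    have hF := (hasDerivAt_intervalIntegral_snd hP 0 x y).add
      (hQ0.integral_hasStrictDerivAt 0 y).hasDerivAt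
    rwa [hftc, sub_add_cancel] at hF

end Potential

section Forms

variable (u v : ℝ × ℝ → ℝ)

noncomputable def formA (z : ℝ × ℝ) : ℝ :=
  partialFst (partialFst u) z * partialSnd v z - partialFst (partialFst v) z * partialSnd u z

noncomputable def formB (z : ℝ × ℝ) : ℝ :=
  partialFst (partialSnd u) z * partialSnd v z - partialFst (partialSnd v) z * partialSnd u z

variable {u v}

lemma contDiff_formA (hu : ContDiff ℝ 3 u) (hv : ContDiff ℝ 3 v) : ContDiff ℝ 1 (formA u v) :=
  ((contDiff_partialFst (contDiff_partialFst hu (by norm_num)) le_rfl).mul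
      (contDiff_partialSnd hv (by norm_num))).sub
    ((contDiff_partialFst (contDiff_partialFst hv (by norm_num)) le_rfl).mul
      (contDiff_partialSnd hu (by norm_num)))

lemma contDiff_formB (hu : ContDiff ℝ 3 u) (hv : ContDiff ℝ 3 v) : ContDiff ℝ 1 (formB u v) :=
  ((contDiff_partialFst (contDiff_partialSnd hu (by norm_num)) le_rfl).mul
      (contDiff_partialSnd hv (by norm_num))).sub
    ((contDiff_partialFst (contDiff_partialSnd hv (by norm_num)) le_rfl).mul
      (contDiff_partialSnd hu (by norm_num)))

theorem partialSnd_formA_eq_partialFst_formB (hu : ContDiff ℝ 3 u) (hv : ContDiff ℝ 3 v)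
    (hHess : ∀ z, partialFst (partialFst u) z * partialSnd (partialSnd v) z =
      partialFst (partialFst v) z * partialSnd (partialSnd u) z) :
    partialSnd (formA u v) = partialFst (formB u v) := by
  funext ⟨x, y⟩
  have d2 {w : ℝ × ℝ → ℝ} (hw : ContDiff ℝ 3 w) : Differentiable ℝ (partialSnd w) :=
    (contDiff_partialSnd (m := 2) hw (by norm_num)).differentiable (by norm_num)
  have d11 {w : ℝ × ℝ → ℝ} (hw : ContDiff ℝ 3 w) : Differentiable ℝ (partialFst (partialFst w)) :=
    (contDiff_partialFst (contDiff_partialFst hw (by norm_num)) le_rfl).differentiable one_ne_zero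
  have d12 {w : ℝ × ℝ → ℝ} (hw : ContDiff ℝ 3 w) : Differentiable ℝ (partialFst (partialSnd w)) :=
    (contDiff_partialFst (contDiff_partialSnd hw (by norm_num)) le_rfl).differentiable one_ne_zero
  have hA : HasDerivAt (fun t => formA u v (x, t)) _ y :=
    ((hasDerivAt_partialSnd (d11 hu _)).mul (hasDerivAt_partialSnd (d2 hv _))).sub
      ((hasDerivAt_partialSnd (d11 hv _)).mul (hasDerivAt_partialSnd (d2 hu _)))
  have hB : HasDerivAt (fun s => formB u v (s, y)) _ x :=
    ((hasDerivAt_partialFst (d12 hu _)).mul (hasDerivAt_partialFst (d2 hv _))).sub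
      ((hasDerivAt_partialFst (d12 hv _)).mul (hasDerivAt_partialFst (d2 hu _)))
  rw [(hasDerivAt_partialSnd ((contDiff_formA hu hv).differentiable one_ne_zero _)).unique hA,
    (hasDerivAt_partialFst ((contDiff_formB hu hv).differentiable one_ne_zero _)).unique hB,
    partialFst_partialFst_partialSnd_comm hu, partialFst_partialFst_partialSnd_comm hv]
  linear_combination hHess (x, y)

end Forms

theorem stmt5_general (τu τv A B : ℝ → ℝ → ℝ)
    (hu : ContDiff ℝ 3 (Function.uncurry τu))
    (hv : ContDiff ℝ 3 (Function.uncurry τv))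
    (hHess : ∀ x y,
      deriv (deriv (fun s => τu s y)) x * deriv (deriv (fun t => τv x t)) y =
      deriv (deriv (fun s => τv s y)) x * deriv (deriv (fun t => τu x t)) y)
    (hA : ∀ x y, A x y =
      deriv (deriv (fun s => τu s y)) x * deriv (fun t => τv x t) y -
      deriv (deriv (fun s => τv s y)) x * deriv (fun t => τu x t) y)
    (hB : ∀ x y, B x y =
      deriv (fun s => deriv (fun t => τu s t) y) x * deriv (fun t => τv x t) y -
      deriv (fun s => deriv (fun t => τv s t) y) x * deriv (fun t => τu x t) y)
    (U : Set (ℝ × ℝ)) :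
    (∀ x y, deriv (fun t => A x t) y = deriv (fun s => B s y) x) ∧
    ∃ F : ℝ → ℝ → ℝ, ∀ q ∈ U,
      deriv (fun s => F s q.2) q.1 = A q.1 q.2 ∧
      deriv (fun t => F q.1 t) q.2 = B q.1 q.2 := by
  have hu' : ContDiff ℝ 2 (uncurry τu) := hu.of_le (by norm_num)
  have hv' : ContDiff ℝ 2 (uncurry τv) := hv.of_le (by norm_num)
  have hAform : uncurry A = formA (uncurry τu) (uncurry τv) := funext fun ⟨x, y⟩ => by
    rw [uncurry_apply_pair, hA, deriv_deriv_fst_eq hu', deriv_deriv_fst_eq hv',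
      deriv_snd_eq_partialSnd (hu'.differentiable (by norm_num) _),
      deriv_snd_eq_partialSnd (hv'.differentiable (by norm_num) _), formA]
  have hBform : uncurry B = formB (uncurry τu) (uncurry τv) := funext fun ⟨x, y⟩ => by
    rw [uncurry_apply_pair, hB, deriv_fst_deriv_snd_eq hu', deriv_fst_deriv_snd_eq hv',
      deriv_snd_eq_partialSnd (hu'.differentiable (by norm_num) _),
      deriv_snd_eq_partialSnd (hv'.differentiable (by norm_num) _), formB]
  have hclosed := partialSnd_formA_eq_partialFst_formB hu hv fun ⟨x, y⟩ => by
    simpa only [deriv_deriv_fst_eq hu', deriv_deriv_fst_eq hv', deriv_deriv_snd_eq hu',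
      deriv_deriv_snd_eq hv'] using hHess x y
  have hAdiff := hAform ▸ (contDiff_formA hu hv).differentiable one_ne_zero
  have hBdiff := hBform ▸ (contDiff_formB hu hv).differentiable one_ne_zero
  refine ⟨fun x y => ?_, ?_⟩
  · rw [deriv_snd_eq_partialSnd (hAdiff _), deriv_fst_eq_partialFst (hBdiff _), hAform, hBform,
      hclosed]
  · obtain ⟨F, hF⟩ := exists_potential_of_partialSnd_eq_partialFst (contDiff_formA hu hv)
      (contDiff_formB hu hv) hclosed
    refine ⟨F, fun q _ => ⟨?_, ?_⟩⟩
    · rw [(hF q.1 q.2).1.deriv, ← hAform, uncurry_apply_pair]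
    · rw [(hF q.1 q.2).2.deriv, ← hBform, uncurry_apply_pair]

/-- Equal Hessian ratios imply (A,B) is closed, hence exact on a simply
connected open domain. -/
theorem stmt5 (τu τv A B : ℝ → ℝ → ℝ)
    (hu : ContDiff ℝ 3 (Function.uncurry τu))
    (hv : ContDiff ℝ 3 (Function.uncurry τv))
    (hu2 : ∀ x y, deriv (deriv (fun s => τu s y)) x ≠ 0)
    (hv2 : ∀ x y, deriv (deriv (fun s => τv s y)) x ≠ 0)
    (hHess : ∀ x y,
      deriv (deriv (fun s => τu s y)) x * deriv (deriv (fun t => τv x t)) y =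
      deriv (deriv (fun s => τv s y)) x * deriv (deriv (fun t => τu x t)) y)
    (hA : ∀ x y, A x y =
      deriv (deriv (fun s => τu s y)) x * deriv (fun t => τv x t) y -
      deriv (deriv (fun s => τv s y)) x * deriv (fun t => τu x t) y)
    (hB : ∀ x y, B x y =
      deriv (fun s => deriv (fun t => τu s t) y) x * deriv (fun t => τv x t) y -
      deriv (fun s => deriv (fun t => τv s t) y) x * deriv (fun t => τu x t) y)
    (U : Set (ℝ × ℝ)) (hU : IsOpen U) (hUsc : SimplyConnectedSpace U) :
    (∀ x y, deriv (fun t => A x t) y = deriv (fun s => B s y) x) ∧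
    ∃ F : ℝ → ℝ → ℝ, ∀ q ∈ U,
      deriv (fun s => F s q.2) q.1 = A q.1 q.2 ∧
      deriv (fun t => F q.1 t) q.2 = B q.1 q.2 :=
  stmt5_general τu τv A B hu hv hHess hA hB U
end

section
/- Let h : ℝ² → ℝ be C² and set z = −exp(iπ ∂_y h + ∂₁σ(∂_x h, ∂_y h)) and w = exp(−iπ ∂_x h + ∂₂σ(∂_x h, ∂_y h)) for a smooth σ. Then the equation ∂_x z / z + ∂_y w / w = 0 has real part equal to the Euler–Lagrange equation ∂₁²σ·∂_x²h + 2∂₁∂₂σ·∂_x∂_y h + ∂₂²σ·∂_y²h = 0 (with arguments (∂_x h, ∂_y h)) and imaginary part equal to π(∂_y∂_x h − ∂_x∂_y h) = 0. -/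
/-!
Since `z` and `w` are exponentials, `∂ₓz/z` and `∂_y w/w` are the derivatives of their exponents,
which the chain rule computes as `πi ∂ₓ∂_y h + ∂ₓ[∂₁σ(∇h)]` and `-πi ∂_y∂ₓh + ∂_y[∂₂σ(∇h)]`.
Symmetry of the second derivatives of the `C²` function `h` makes the imaginary part vanish, and that
of `σ` merges the two mixed terms of the real part into `2 ∂₁∂₂σ · ∂ₓ∂_y h`.
-/

open Function

section Partials

variable {E : Type*} [NormedAddCommGroup E] [NormedSpace ℝ E] {f : ℝ → ℝ → E}

theorem DifferentiableAt.hasDerivAt_partial_fst {x y : ℝ}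
    (hf : DifferentiableAt ℝ (uncurry f) (x, y)) :
    HasDerivAt (fun s => f s y) (fderiv ℝ (uncurry f) (x, y) (1, 0)) x :=
  HasFDerivAt.comp_hasDerivAt (l := uncurry f) x hf.hasFDerivAt
    ((hasDerivAt_id x).prodMk (hasDerivAt_const x y))

theorem DifferentiableAt.hasDerivAt_partial_snd {x y : ℝ}
    (hf : DifferentiableAt ℝ (uncurry f) (x, y)) :
    HasDerivAt (fun t => f x t) (fderiv ℝ (uncurry f) (x, y) (0, 1)) y :=
  HasFDerivAt.comp_hasDerivAt (l := uncurry f) y hf.hasFDerivAt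
    ((hasDerivAt_const y x).prodMk (hasDerivAt_id y))

theorem uncurry_deriv_fst_eq_fderiv (hf : Differentiable ℝ (uncurry f)) :
    uncurry (fun x y => deriv (fun s => f s y) x) = fun p => fderiv ℝ (uncurry f) p (1, 0) :=
  funext fun p => (hf p).hasDerivAt_partial_fst.deriv

theorem uncurry_deriv_snd_eq_fderiv (hf : Differentiable ℝ (uncurry f)) :
    uncurry (fun x y => deriv (fun t => f x t) y) = fun p => fderiv ℝ (uncurry f) p (0, 1) :=
  funext fun p => (hf p).hasDerivAt_partial_snd.deriv

variable {n : WithTop ℕ∞}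

theorem ContDiff.uncurry_deriv_fst (hf : ContDiff ℝ (n + 1) (uncurry f)) :
    ContDiff ℝ n (uncurry fun x y => deriv (fun s => f s y) x) := by
  rw [uncurry_deriv_fst_eq_fderiv (hf.differentiable (by simp))]
  exact (hf.fderiv_right le_rfl).clm_apply contDiff_const

theorem ContDiff.uncurry_deriv_snd (hf : ContDiff ℝ (n + 1) (uncurry f)) :
    ContDiff ℝ n (uncurry fun x y => deriv (fun t => f x t) y) := by
  rw [uncurry_deriv_snd_eq_fderiv (hf.differentiable (by simp))]
  exact (hf.fderiv_right le_rfl).clm_apply contDiff_const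

theorem ContDiff.deriv_deriv_comm (hf : ContDiff ℝ 2 (uncurry f)) (x y : ℝ) :
    deriv (fun t => deriv (fun s => f s t) x) y = deriv (fun s => deriv (fun t => f s t) y) x := by
  have hd : Differentiable ℝ (uncurry f) := hf.differentiable two_ne_zero
  have hd2 : Differentiable ℝ (fderiv ℝ (uncurry f)) :=
    (hf.fderiv_right (m := 1) le_rfl).differentiable one_ne_zero
  have hd₁ := (hf.uncurry_deriv_fst (n := 1)).differentiable one_ne_zero
  have hd₂ := (hf.uncurry_deriv_snd (n := 1)).differentiable one_ne_zero
  rw [(hd₁ (x, y)).hasDerivAt_partial_snd.deriv, (hd₂ (x, y)).hasDerivAt_partial_fst.deriv,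
    uncurry_deriv_fst_eq_fderiv hd, uncurry_deriv_snd_eq_fderiv hd,
    fderiv_clm_apply (hd2 _) (differentiableAt_const _),
    fderiv_clm_apply (hd2 _) (differentiableAt_const _)]
  simpa using ((hf.contDiffAt (x := (x, y))).isSymmSndFDerivAt (by simp)).eq (0, 1) (1, 0)

theorem hasDerivAt_uncurry_comp {a b : ℝ → ℝ} {a' b' t : ℝ}
    (hf : DifferentiableAt ℝ (uncurry f) (a t, b t)) (ha : HasDerivAt a a' t)
    (hb : HasDerivAt b b' t) :
    HasDerivAt (fun s => f (a s) (b s))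
      (a' • deriv (fun u => f u (b t)) (a t) + b' • deriv (fun v => f (a t) v) (b t)) t := by
  have h := HasFDerivAt.comp_hasDerivAt (l := uncurry f) t hf.hasFDerivAt (ha.prodMk hb)
  rwa [show ((a', b') : ℝ × ℝ) = a' • (1, 0) + b' • (0, 1) by simp, map_add, map_smul, map_smul,
    ← hf.hasDerivAt_partial_fst.deriv, ← hf.hasDerivAt_partial_snd.deriv] at h

end Partials

section LogDeriv

variable {𝕜 : Type*} [NontriviallyNormedField 𝕜]

theorem logDeriv_fun_neg {𝕜' : Type*} [NontriviallyNormedField 𝕜'] [NormedAlgebra 𝕜 𝕜']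
    (f : 𝕜 → 𝕜') (x : 𝕜) : logDeriv (fun s => -f s) x = logDeriv f x := by
  simpa using logDeriv_const_mul x (-1 : 𝕜') (by norm_num) (f := f)

variable [NormedAlgebra 𝕜 ℂ]

theorem logDeriv_cexp_comp {g : 𝕜 → ℂ} {x : 𝕜} (hg : DifferentiableAt 𝕜 g x) :
    logDeriv (fun s => Complex.exp (g s)) x = deriv g x := by
  simpa [Complex.logDeriv_exp, comp_def] using
    logDeriv_comp (f := Complex.exp) Complex.differentiableAt_exp hg

end LogDeriv

theorem logDeriv_cexp_add_uncurry_comp {F : ℝ → ℝ → ℝ} {a b u : ℝ → ℝ} {t : ℝ} (c : ℂ)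
    (hu : DifferentiableAt ℝ u t) (hF : DifferentiableAt ℝ (uncurry F) (a t, b t))
    (ha : DifferentiableAt ℝ a t) (hb : DifferentiableAt ℝ b t) :
    logDeriv (fun s => Complex.exp (c * u s + F (a s) (b s))) t =
      c * deriv u t + ((deriv a t * deriv (fun p => F p (b t)) (a t) +
        deriv b t * deriv (fun q => F (a t) q) (b t) : ℝ) : ℂ) := by
  have hg := (hu.hasDerivAt.ofReal_comp.const_mul c).fun_add
    (hasDerivAt_uncurry_comp hF ha.hasDerivAt hb.hasDerivAt).ofReal_comp
  rw [logDeriv_cexp_comp hg.differentiableAt, hg.deriv]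
  rfl

/-- Real part of ∂ₓz/z + ∂_y w/w is the Euler–Lagrange expression; imaginary
part is π(∂_y∂ₓh − ∂ₓ∂_y h) = 0. -/
theorem stmt18 (σ h : ℝ → ℝ → ℝ)
    (hσ : ContDiff ℝ 2 (Function.uncurry σ))
    (hh : ContDiff ℝ 2 (Function.uncurry h))
    (z w : ℝ → ℝ → ℂ)
    (hx : ℝ → ℝ → ℝ) (hy : ℝ → ℝ → ℝ)
    (hhx : ∀ x y, hx x y = deriv (fun s => h s y) x)
    (hhy : ∀ x y, hy x y = deriv (fun t => h x t) y)
    (hzdef : ∀ x y, z x y = -Complex.exp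
      ((Real.pi : ℂ) * Complex.I * (hy x y : ℂ) +
        ((deriv (fun s => σ s (hy x y)) (hx x y) : ℝ) : ℂ)))
    (hwdef : ∀ x y, w x y = Complex.exp
      (-(Real.pi : ℂ) * Complex.I * (hx x y : ℂ) +
        ((deriv (fun t => σ (hx x y) t) (hy x y) : ℝ) : ℂ))) :
    ∀ x y,
      ((deriv (fun s => z s y) x / z x y + deriv (fun t => w x t) y / w x y).re =
        deriv (deriv (fun s => σ s (hy x y))) (hx x y) * deriv (fun s => hx s y) x +
        2 * deriv (fun s => deriv (fun t => σ s t) (hy x y)) (hx x y) *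
          deriv (fun t => hx x t) y +
        deriv (deriv (fun t => σ (hx x y) t)) (hy x y) * deriv (fun t => hy x t) y) ∧
      ((deriv (fun s => z s y) x / z x y + deriv (fun t => w x t) y / w x y).im =
        Real.pi * (deriv (fun t => hx x t) y - deriv (fun s => hy s y) x)) ∧
      Real.pi * (deriv (fun t => hx x t) y - deriv (fun s => hy s y) x) = 0 := by
  intro x y
  have hP : Differentiable ℝ (uncurry fun s t => deriv (fun u => σ u t) s) :=
    (hσ.uncurry_deriv_fst (n := 1)).differentiable one_ne_zero
  have hQ : Differentiable ℝ (uncurry fun s t => deriv (fun u => σ s u) t) :=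
    (hσ.uncurry_deriv_snd (n := 1)).differentiable one_ne_zero
  have hX : Differentiable ℝ (uncurry hx) := by
    rw [funext₂ hhx]
    exact (hh.uncurry_deriv_fst (n := 1)).differentiable one_ne_zero
  have hY : Differentiable ℝ (uncurry hy) := by
    rw [funext₂ hhy]
    exact (hh.uncurry_deriv_snd (n := 1)).differentiable one_ne_zero
  have hmixed : deriv (fun s => hy s y) x = deriv (fun t => hx x t) y := by
    simp only [hhx, hhy]
    exact (hh.deriv_deriv_comm x y).symm
  rw [← logDeriv_apply, ← logDeriv_apply]
  simp only [hzdef, hwdef, logDeriv_fun_neg]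
  rw [logDeriv_cexp_add_uncurry_comp _ (hY _).hasDerivAt_partial_fst.differentiableAt (hP _)
      (hX _).hasDerivAt_partial_fst.differentiableAt (hY _).hasDerivAt_partial_fst.differentiableAt,
    logDeriv_cexp_add_uncurry_comp _ (hX _).hasDerivAt_partial_snd.differentiableAt (hQ _)
      (hX _).hasDerivAt_partial_snd.differentiableAt (hY _).hasDerivAt_partial_snd.differentiableAt,
    hσ.deriv_deriv_comm, hmixed]
  refine ⟨?_, by simp, by ring⟩
  simp only [Complex.add_re, Complex.mul_re, Complex.neg_re, Complex.neg_im, Complex.ofReal_re,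
    Complex.ofReal_im, Complex.I_re, Complex.I_im]
  ring
end
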